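/- Let E be a standard Borel space, (F, 𝓕) a measurable space, T : E → F measurable and surjective, π a probability measure on E, and P a proposal kernel on E with ν_P^⊤ ≪ ν_P. If there exists a measurable function β : F × F → [0,1] such that β(T(x), T(x')) = α_P(x, x') for all x, x' ∈ E, then α_{T_*P}(y, y') = β(y, y') for ν_{T_*P}-almost every (y, y') ∈ F × F. In particular, if T is bijective, then α_{T_*P}(y, y') = α_P(T^{-1}(y), T^{-1}(y')). -/

import Mathlib

open MeasureTheory ProbabilityTheory
open scoped ENNReal NNReal

/-- The pushforward transition kernel `T_*P(y, B) := E[P(X, T⁻¹(B)) | T(X) = y]`, `X ∼ π`,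
realized via a regular conditional distribution `condDistrib id T π` of `X` given `T(X)`. -/
noncomputable def pushKernel {E F : Type*} [MeasurableSpace E] [StandardBorelSpace E] [Nonempty E]
    [MeasurableSpace F] (T : E → F) (π : Measure E) [IsFiniteMeasure π] (K : Kernel E E) :
    Kernel F F :=
  Kernel.map (K ∘ₖ condDistrib id T π) T

/-- The Metropolis–Hastings acceptance probability `α_P(x, x') := min{1, dν_P^⊤/dν_P (x, x')}`,
where `ν_P(dx dx') := P(x, dx') π(dx)` and `ν_P^⊤` is its swap. -/
noncomputable def mhAccept {E : Type*} [MeasurableSpace E] (π : Measure E) (P : Kernel E E) :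
    E × E → ℝ≥0∞ :=
  fun p => min 1 (((π ⊗ₘ P).map Prod.swap).rnDeriv (π ⊗ₘ P) p)

/-- The pushforward acceptance probability
`α_{T_*P}(y, y') := min{1, d𝐓_*ν_P^⊤/d𝐓_*ν_P (y, y')}` with `𝐓(x, x') = (T x, T x')`. -/
noncomputable def pushAccept {E F : Type*} [MeasurableSpace E] [MeasurableSpace F]
    (T : E → F) (π : Measure E) (P : Kernel E E) : F × F → ℝ≥0∞ :=
  fun q => min 1 ((((π ⊗ₘ P).map Prod.swap).map (Prod.map T T)).rnDeriv
    ((π ⊗ₘ P).map (Prod.map T T)) q)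

/-! The joint law `ν_{T_*P}` is the image of `ν_P` under `𝐓`: composing `P` with the conditional
law of `X` given `T X` and integrating against `T_*π` undoes the conditioning. Hence `α_{T_*P}` is
`min 1` of the density of `𝐓_*ν_P^⊤` with respect to `𝐓_*ν_P`, which is the conditional expectation
of `r = dν_P^⊤/dν_P` given `𝐓`. On `{β < 1}` the density `r = β ∘ 𝐓` is already a function of `𝐓`,
so there the pushforward density is `β`; on `{β = 1}` we have `r ≥ 1`, hence its average is `≥ 1`
as well, and truncating at `1` gives `β` again. -/

namespace ProbabilityTheory.Kernel

lemma parallelComp_id_comp_deterministic_prodMap {α β γ δ : Type*} [MeasurableSpace α]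
    [MeasurableSpace β] [MeasurableSpace γ] [MeasurableSpace δ] (κ : Kernel β γ) [IsSFiniteKernel κ]
    {f : α → δ} (hf : Measurable f) :
    (Kernel.id ∥ₖ κ) ∘ₖ deterministic (Prod.map f id) (hf.prodMap measurable_id) =
      deterministic (Prod.map f id) (hf.prodMap measurable_id) ∘ₖ (Kernel.id ∥ₖ κ) := by
  -- both sides are `deterministic f hf ∥ₖ κ`
  rw [← deterministic_parallelComp_deterministic hf (measurable_id (α := β)),
    ← deterministic_parallelComp_deterministic hf (measurable_id (α := γ)), ← Kernel.id,
    ← Kernel.id, parallelComp_comp_parallelComp, parallelComp_comp_parallelComp, id_comp,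
    comp_id, id_comp, comp_id]

end ProbabilityTheory.Kernel

namespace MeasureTheory.Measure

lemma parallelComp_id_comp_map_prodMap {α β γ δ : Type*} [MeasurableSpace α]
    [MeasurableSpace β] [MeasurableSpace γ] [MeasurableSpace δ] (ρ : Measure (α × β))
    (κ : Kernel β γ) [IsSFiniteKernel κ] {f : α → δ} (hf : Measurable f) :
    (Kernel.id ∥ₖ κ) ∘ₘ ρ.map (Prod.map f id) = ((Kernel.id ∥ₖ κ) ∘ₘ ρ).map (Prod.map f id) := by
  rw [← deterministic_comp_eq_map (hf.prodMap measurable_id),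
    ← deterministic_comp_eq_map (hf.prodMap measurable_id), comp_assoc,
    comp_assoc, Kernel.parallelComp_id_comp_deterministic_prodMap κ hf]

section

variable {γ δ : Type*} [MeasurableSpace γ] [MeasurableSpace δ] {μ μ' : Measure γ}
  [IsFiniteMeasure μ] [IsFiniteMeasure μ'] {f : γ → δ}

lemma setLIntegral_rnDeriv_map (h : μ' ≪ μ) (hf : Measurable f) {s : Set δ}
    (hs : MeasurableSet s) :
    ∫⁻ y in s, (μ'.map f).rnDeriv (μ.map f) y ∂(μ.map f) = ∫⁻ x in f ⁻¹' s, μ'.rnDeriv μ x ∂μ := by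
  rw [setLIntegral_rnDeriv (h.map hf), map_apply hf hs, setLIntegral_rnDeriv h]

lemma le_rnDeriv_map_ae_restrict (h : μ' ≪ μ) (hf : Measurable f) {β : δ → ℝ≥0∞}
    (hβ : Measurable β) {s : Set δ} (hs : MeasurableSet s)
    (hle : ∀ x, f x ∈ s → β (f x) ≤ μ'.rnDeriv μ x) :
    β ≤ᵐ[(μ.map f).restrict s] (μ'.map f).rnDeriv (μ.map f) := by
  refine ae_le_of_forall_setLIntegral_le_of_sigmaFinite hβ fun t ht _ => ?_
  rw [restrict_restrict ht, setLIntegral_rnDeriv_map h hf (ht.inter hs),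
    setLIntegral_map (ht.inter hs) hβ hf]
  exact setLIntegral_mono' (hf (ht.inter hs)) fun x hx => hle x hx.2

lemma rnDeriv_map_le_ae_restrict (h : μ' ≪ μ) (hf : Measurable f) {β : δ → ℝ≥0∞}
    (hβ : Measurable β) {s : Set δ} (hs : MeasurableSet s)
    (hle : ∀ x, f x ∈ s → μ'.rnDeriv μ x ≤ β (f x)) :
    (μ'.map f).rnDeriv (μ.map f) ≤ᵐ[(μ.map f).restrict s] β := by
  refine ae_le_of_forall_setLIntegral_le_of_sigmaFinite (measurable_rnDeriv _ _) fun t ht _ => ?_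
  rw [restrict_restrict ht, setLIntegral_rnDeriv_map h hf (ht.inter hs),
    setLIntegral_map (ht.inter hs) hβ hf]
  exact setLIntegral_mono' (hf (ht.inter hs)) fun x hx => hle x hx.2

lemma min_one_rnDeriv_map_ae_eq (h : μ' ≪ μ) (hf : Measurable f) {β : δ → ℝ≥0∞}
    (hβ : Measurable β) (hβ_le : ∀ y, β y ≤ 1)
    (hfac : ∀ x, β (f x) = min 1 (μ'.rnDeriv μ x)) :
    ∀ᵐ y ∂(μ.map f), min 1 ((μ'.map f).rnDeriv (μ.map f) y) = β y := by
  set S := {y | β y < 1}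
  have hS : MeasurableSet S := measurableSet_lt hβ measurable_const
  have h_lt (x) (hx : f x ∈ S) : μ'.rnDeriv μ x = β (f x) := by
    have : min 1 (μ'.rnDeriv μ x) < 1 := hfac x ▸ hx
    rw [hfac x, min_eq_right ((min_lt_iff.mp this).resolve_left (lt_irrefl 1)).le]
  have h_one (x) (hx : f x ∉ S) : 1 ≤ μ'.rnDeriv μ x := by
    have : min 1 (μ'.rnDeriv μ x) = 1 := hfac x ▸ le_antisymm (hβ_le _) (not_lt.mp hx)
    exact min_eq_left_iff.mp this
  refine ae_of_ae_restrict_of_ae_restrict_compl S ?_ ?_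
  · filter_upwards [le_rnDeriv_map_ae_restrict h hf hβ hS (fun x hx => (h_lt x hx).ge),
      rnDeriv_map_le_ae_restrict h hf hβ hS (fun x hx => (h_lt x hx).le)] with y hy₁ hy₂
    rw [le_antisymm hy₂ hy₁, min_eq_right (hβ_le y)]
  · filter_upwards [le_rnDeriv_map_ae_restrict h hf measurable_const hS.compl h_one,
      ae_restrict_mem hS.compl] with y hy hyS
    rw [min_eq_left hy, le_antisymm (hβ_le y) (not_lt.mp hyS)]

end

end MeasureTheory.Measure

lemma compProd_pushKernel {E F : Type*} [MeasurableSpace E] [StandardBorelSpace E] [Nonempty E]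
    [MeasurableSpace F] {T : E → F} (hT : Measurable T)
    (π : Measure E) [IsFiniteMeasure π] (P : Kernel E E) [IsSFiniteKernel P] :
    (π.map T) ⊗ₘ pushKernel T π P = (π ⊗ₘ P).map (Prod.map T T) := by
  have hcopy : π.map (fun x => (T x, id x)) = (Kernel.copy E ∘ₘ π).map (Prod.map T id) := by
    rw [← Measure.map_id (μ := π), Measure.copy_comp_map aemeasurable_id, Measure.map_id,
      Measure.map_map (hT.prodMap measurable_id) (measurable_id.prod measurable_id)]
    rfl
  rw [pushKernel, Measure.compProd_map hT, ← Measure.parallelComp_comp_compProd,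
    compProd_map_condDistrib aemeasurable_id, hcopy, Measure.parallelComp_id_comp_map_prodMap _ _ hT,
    ← Measure.compProd_eq_parallelComp_comp_copy_comp,
    Measure.map_map (measurable_id.prodMap hT) (hT.prodMap measurable_id)]
  rfl

theorem pushAccept_eq_of_factorization_general
    {E F : Type*} [MeasurableSpace E] [StandardBorelSpace E] [Nonempty E] [MeasurableSpace F]
    (T : E → F) (hT : Measurable T)
    (π : Measure E) [IsProbabilityMeasure π] (P : Kernel E E) [IsMarkovKernel P]
    (hac : ((π ⊗ₘ P).map Prod.swap) ≪ (π ⊗ₘ P)) :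
    (∀ β : F × F → ℝ≥0∞, Measurable β → (∀ q, β q ≤ 1) →
        (∀ x x' : E, β (T x, T x') = mhAccept π P (x, x')) →
        ∀ᵐ q ∂((π.map T) ⊗ₘ pushKernel T π P), pushAccept T π P q = β q) ∧
      ∀ e : E ≃ᵐ F, (⇑e = T) →
        ∀ᵐ q ∂((π.map T) ⊗ₘ pushKernel T π P),
          pushAccept T π P q = mhAccept π P (e.symm q.1, e.symm q.2) := by
  have hfactor (β : F × F → ℝ≥0∞) (hβ : Measurable β) (hβ_le : ∀ q, β q ≤ 1)
      (hfac : ∀ x x' : E, β (T x, T x') = mhAccept π P (x, x')) :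
      ∀ᵐ q ∂((π.map T) ⊗ₘ pushKernel T π P), pushAccept T π P q = β q := by
    rw [compProd_pushKernel hT]
    exact Measure.min_one_rnDeriv_map_ae_eq hac (hT.prodMap hT) hβ hβ_le fun p => hfac p.1 p.2
  refine ⟨hfactor, fun e he => hfactor _ ?_ (fun q => min_le_left _ _) fun x x' => ?_⟩
  · exact (measurable_const.min (Measure.measurable_rnDeriv _ _)).comp
      (e.symm.measurable.prodMap e.symm.measurable)
  · simp only [← he, e.symm_apply_apply]

/-- If there is a measurable `β : F × F → [0, 1]` with
`β(T x, T x') = α_P(x, x')` for all `x, x' ∈ E`, then `α_{T_*P} = β`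
`ν_{T_*P}`-almost everywhere, where `ν_{T_*P}(dy dy') := T_*P(y, dy') T_*π(dy)`.
In particular, if `T` is bijective (a measurable equivalence), then
`α_{T_*P}(y, y') = α_P(T⁻¹ y, T⁻¹ y')` (`ν_{T_*P}`-a.e.). -/
theorem pushAccept_eq_of_factorization
    {E F : Type*} [MeasurableSpace E] [StandardBorelSpace E] [Nonempty E] [MeasurableSpace F]
    (T : E → F) (hT : Measurable T) (hTsurj : Function.Surjective T)
    (π : Measure E) [IsProbabilityMeasure π] (P : Kernel E E) [IsMarkovKernel P]
    (hac : ((π ⊗ₘ P).map Prod.swap) ≪ (π ⊗ₘ P)) :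
    (∀ β : F × F → ℝ≥0∞, Measurable β → (∀ q, β q ≤ 1) →
        (∀ x x' : E, β (T x, T x') = mhAccept π P (x, x')) →
        ∀ᵐ q ∂((π.map T) ⊗ₘ pushKernel T π P), pushAccept T π P q = β q) ∧
      ∀ e : E ≃ᵐ F, (⇑e = T) →
        ∀ᵐ q ∂((π.map T) ⊗ₘ pushKernel T π P),
          pushAccept T π P q = mhAccept π P (e.symm q.1, e.symm q.2) :=
  pushAccept_eq_of_factorization_general T hT π P hac
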